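/- The signed Petersen graph with all edges negative has frustration index exactly 3, which equals (3/10) times its number of vertices; equivalently, the maximum cut of the Petersen graph has size 12. -/

import Mathlib

open scoped Classical

/-- The Boolean indicating whether an edge crosses the vertex set `X`. -/
noncomputable def sgnCross {V : Type*} (X : Set V) : Sym2 V → Bool :=
  Sym2.lift ⟨fun a b => xor (decide (a ∈ X)) (decide (b ∈ X)),
    fun a b => Bool.xor_comm _ _⟩

/-- The signature obtained from `σ` by switching at the edge-cut `[X, Xᶜ]`:
the signs of all edges crossing `X` are flipped.  (`true` = negative.) -/
noncomputable def sgnSwitch {V : Type*} (σ : Sym2 V → Bool) (X : Set V) : Sym2 V → Bool :=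
  fun e => xor (σ e) (sgnCross X e)

/-- The number of negative edges of the signed graph `(G, σ)`. -/
noncomputable def negNum {V : Type*} (G : SimpleGraph V) (σ : Sym2 V → Bool) : ℕ :=
  {e | e ∈ G.edgeSet ∧ σ e = true}.ncard

/-- The frustration index of `(G, σ)`: the minimum number of negative edges over
all switching-equivalent signatures. -/
noncomputable def frust {V : Type*} (G : SimpleGraph V) (σ : Sym2 V → Bool) : ℕ :=
  ⨅ X : Set V, negNum G (sgnSwitch σ X)

/-- The number of edges of `G` in the edge-cut `[X, Xᶜ]`. -/
noncomputable def cutSize {V : Type*} (G : SimpleGraph V) (X : Set V) : ℕ :=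
  {e | e ∈ G.edgeSet ∧ sgnCross X e = true}.ncard

/-- A graph is 2-edge-connected if every edge-cut has at least 2 edges. -/
def TwoEdgeConn {V : Type*} (G : SimpleGraph V) : Prop :=
  ∀ X : Set V, X.Nonempty → Xᶜ.Nonempty → 2 ≤ cutSize G X

/-- The Petersen graph, as the Kneser graph `K(5,2)`. -/
def petersen : SimpleGraph {s : Finset (Fin 5) // s.card = 2} where
  Adj a b := Disjoint a.1 b.1
  symm := ⟨fun _ _ h => h.symm⟩
  loopless := by
    refine ⟨fun a h => ?_⟩
    change Disjoint a.1 a.1 at h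
    rw [disjoint_self] at h
    have h2 := a.2
    rw [h] at h2
    simp at h2

/-!
Switching the all-negative signature at `X` leaves negative exactly the edges that do not cross the
cut `[X, Xᶜ]`, so the frustration index of `(G, −)` is the least number of uncut edges. Every cut
leaves at least one edge of each odd cycle uncut. The Petersen graph has twelve pentagons, one for
each Hamiltonian cycle of `K₅`, and every edge lies on four of them; hence every cut leaves at
least `12 / 4 = 3` of the `15` edges uncut. The cut separating the pairs through `0` from the other
pairs leaves exactly `3`.
-/

open Finset

section Cuts

variable {V : Type*}

theorem sgnCross_eq_lift (X : Set V) [DecidablePred (· ∈ X)] :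
    sgnCross X = Sym2.lift ⟨fun a b => xor (decide (a ∈ X)) (decide (b ∈ X)),
      fun _ _ => Bool.xor_comm _ _⟩ := by
  funext e
  induction e using Sym2.ind with
  | _ a b => simp only [sgnCross, Sym2.lift_mk]; congr

theorem sgnCross_mk (X : Set V) [DecidablePred (· ∈ X)] (a b : V) :
    sgnCross X s(a, b) = xor (decide (a ∈ X)) (decide (b ∈ X)) := by
  rw [sgnCross_eq_lift, Sym2.lift_mk]

theorem exists_sgnCross_eq_false_of_odd {n : ℕ} [NeZero n] (hn : Odd n) (c : Fin n → V)
    (X : Set V) : ∃ i, sgnCross X s(c i, c (i + 1)) = false := by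
  by_contra! hcross
  -- the side of the cut, read in `ZMod 2`, would change at each of the `n` steps around the walk
  let side : Fin n → ZMod 2 := fun i => if c i ∈ X then 1 else 0
  have hstep : ∀ i, side (i + 1) = side i + 1 := by
    intro i
    have hi := hcross i
    rw [ne_eq, Bool.not_eq_false, sgnCross_mk] at hi
    by_cases c i ∈ X <;> by_cases c (i + 1) ∈ X <;> simp_all [side, CharTwo.add_self_eq_zero]
  have hsum : ∑ i, side (i + 1) = ∑ i, side i :=
    Fintype.sum_equiv (Equiv.addRight 1) _ _ fun _ => rfl
  simp only [hstep, sum_add_distrib, sum_const, card_univ, Fintype.card_fin, nsmul_eq_mul,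
    mul_one, add_eq_left, ZMod.natCast_eq_zero_iff_even] at hsum
  exact Nat.not_even_iff_odd.mpr hn hsum

variable (G : SimpleGraph V) [Fintype V] [DecidableRel G.Adj]

theorem cutSize_eq_card (X : Set V) :
    cutSize G X = #{e ∈ G.edgeFinset | sgnCross X e = true} := by
  rw [cutSize, ← Set.ncard_coe_finset]
  congr 1
  ext e
  simp

theorem negNum_sgnSwitch_allNeg (X : Set V) :
    negNum G (sgnSwitch (fun _ => true) X) = #{e ∈ G.edgeFinset | sgnCross X e = false} := by
  rw [negNum, ← Set.ncard_coe_finset]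
  congr 1
  ext e
  simp [sgnSwitch]

theorem cutSize_add_negNum_sgnSwitch_allNeg (X : Set V) :
    cutSize G X + negNum G (sgnSwitch (fun _ => true) X) = #G.edgeFinset := by
  rw [cutSize_eq_card, negNum_sgnSwitch_allNeg]
  simpa using card_filter_add_card_filter_not (s := G.edgeFinset) (sgnCross X · = true)

theorem card_le_mul_card_uncut [DecidableEq V] {ι : Type*} [Fintype ι] {n : ℕ} [NeZero n]
    (hn : Odd n) (c : ι → Fin n → V) (hc : ∀ j i, G.Adj (c j i) (c j (i + 1))) {k : ℕ}
    (hk : ∀ u v, G.Adj u v → #{j | ∃ i, s(c j i, c j (i + 1)) = s(u, v)} ≤ k) (X : Set V) :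
    Fintype.card ι ≤ k * #{e ∈ G.edgeFinset | sgnCross X e = false} := by
  have hdouble := card_mul_le_card_mul (s := univ)
    (t := {e ∈ G.edgeFinset | sgnCross X e = false}) (m := 1) (n := k)
    (fun j e => ∃ i, s(c j i, c j (i + 1)) = e) ?_ ?_
  · simpa [mul_comm] using hdouble
  · intro j _
    obtain ⟨i, hi⟩ := exists_sgnCross_eq_false_of_odd hn (c j) X
    refine one_le_card.mpr ⟨_, (mem_bipartiteAbove _).mpr ⟨mem_filter.mpr ⟨?_, hi⟩, i, rfl⟩⟩
    simpa using hc j i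
  · intro e he
    induction e using Sym2.ind with
    | _ u v =>
      simp only [mem_filter, SimpleGraph.mem_edgeFinset, SimpleGraph.mem_edgeSet] at he
      exact hk u v he.1

omit [Fintype V] [DecidableRel G.Adj] in
theorem frust_eq_of_le_negNum {σ : Sym2 V → Bool} {m : ℕ}
    (hle : ∀ X, m ≤ negNum G (sgnSwitch σ X)) (X : Set V)
    (hX : negNum G (sgnSwitch σ X) = m) : frust G σ = m :=
  le_antisymm (hX ▸ ciInf_le (OrderBot.bddBelow _) X) (le_ciInf hle)

end Cuts

instance : DecidableRel petersen.Adj := fun a b => inferInstanceAs (Decidable (Disjoint a.1 b.1))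

/-- The `5`-cycle of the Petersen graph traced by the Hamiltonian cycle `σ 0, σ 1, …, σ 4` of `K₅`:
its `k`-th vertex is the pair `{σ (2k), σ (2k+1)}`. -/
def pentagon (σ : Equiv.Perm (Fin 5)) (k : Fin 5) : {s : Finset (Fin 5) // s.card = 2} :=
  ⟨{σ (2 * k), σ (2 * k + 1)}, card_pair (σ.injective.ne (by simp))⟩

theorem petersen_adj_pentagon (σ : Equiv.Perm (Fin 5)) (k : Fin 5) :
    petersen.Adj (pentagon σ k) (pentagon σ (k + 1)) := by
  simp only [petersen, pentagon, disjoint_insert_left, disjoint_insert_right, disjoint_singleton,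
    mem_insert, mem_singleton, ne_eq, σ.injective.eq_iff]
  revert k
  decide

-- each edge lies on 4 of the 12 pentagons, and each pentagon is traced by 10 permutations
theorem card_pentagon_through_edge_le : ∀ u v, petersen.Adj u v →
    #{σ | ∃ k, s(pentagon σ k, pentagon σ (k + 1)) = s(u, v)} ≤ 40 := by
  decide +kernel

theorem card_edgeFinset_petersen : #petersen.edgeFinset = 15 := by
  decide

theorem three_le_negNum_petersen (X : Set {s : Finset (Fin 5) // s.card = 2}) :
    3 ≤ negNum petersen (sgnSwitch (fun _ => true) X) := by
  have hpacking := card_le_mul_card_uncut petersen ⟨2, rfl⟩ pentagon petersen_adj_pentagon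
    card_pentagon_through_edge_le X
  simp only [Fintype.card_perm, Fintype.card_fin, Nat.factorial] at hpacking
  rw [negNum_sgnSwitch_allNeg]
  omega

/-- The pairs through `0` span no edge, and the six pairs avoiding `0` span a perfect matching. -/
theorem negNum_petersen_mem_zero :
    negNum petersen (sgnSwitch (fun _ => true) {v | (0 : Fin 5) ∈ v.1}) = 3 := by
  rw [negNum_sgnSwitch_allNeg, sgnCross_eq_lift]
  decide

/-- The all-negative signed Petersen graph has frustration index
exactly `3 = (3/10)·v`; equivalently, the maximum cut of the Petersen graph has
size `12 = 15 − 3`. -/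
theorem petersen_all_negative_frust :
    frust petersen (fun _ => true) = 3 ∧
    10 * frust petersen (fun _ => true) =
      3 * Fintype.card {s : Finset (Fin 5) // s.card = 2} ∧
    (∃ X : Set {s : Finset (Fin 5) // s.card = 2}, cutSize petersen X = 12) ∧
    (∀ X : Set {s : Finset (Fin 5) // s.card = 2}, cutSize petersen X ≤ 12) := by
  have hfrust : frust petersen (fun _ => true) = 3 :=
    frust_eq_of_le_negNum petersen three_le_negNum_petersen _ negNum_petersen_mem_zero
  have hcut X : cutSize petersen X + negNum petersen (sgnSwitch (fun _ => true) X) = 15 :=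
    card_edgeFinset_petersen ▸ cutSize_add_negNum_sgnSwitch_allNeg petersen X
  refine ⟨hfrust, by rw [hfrust, Fintype.card_finset_len]; rfl, ⟨{v | 0 ∈ v.1}, ?_⟩, fun X => ?_⟩
  · have h := hcut {v | 0 ∈ v.1}
    rw [negNum_petersen_mem_zero] at h
    omega
  · have := hcut X
    have := three_le_negNum_petersen X
    omega
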